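/- Let K be a differential field of characteristic 0 and A ∈ M_n(K[∂]) a non-degenerate matrix differential operator. Then A is invertible in the ring M_n(K[∂]) if and only if the degree d(A) of its Dieudonné determinant is zero. Moreover, d(A) ≥ 0 always. -/

import Mathlib

/-!
`K[∂]` admits division with remainder on both sides, so Gaussian elimination works over it: swap
a nonzero entry into the pivot position and clear its row and column up to remainders of smaller
order, until no remainder is left. Only swaps and unitriangular matrices are used, and these are
units of degree zero (a lower unitriangular matrix becomes upper unitriangular after conjugation
by the order-reversing permutation). Hence a non-degenerate `A` is equivalent to a diagonal `D`
with nonzero diagonal, and `d(A) = ∑ ord D_ii ≥ 0`. If `d(A) = 0`, every `D_ii` is a nonzero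
element of `K`, so `D` and `A` are invertible; conversely `d(A) + d(A⁻¹) = d(1) = 0` forces
`d(A) = 0`.
-/

/-- The ring of differential operators K[∂] over a differential field (K, d),
characterized abstractly. -/
structure DiffOpRing (K : Type) [Field K] (d : K → K) (R : Type) [Ring R] where
  ι : K →+* R
  dop : R
  comm : ∀ a : K, dop * ι a = ι a * dop + ι (d a)
  repr : ∀ r : R, ∃! c : ℕ →₀ K, r = c.sum fun i a => ι a * dop ^ i

/-- The coefficients of a differential operator. -/
noncomputable def DiffOpRing.coeff {K : Type} [Field K] {d : K → K} {R : Type} [Ring R]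
    (S : DiffOpRing K d R) (r : R) : ℕ →₀ K := (S.repr r).choose

/-- The order of a differential operator. -/
noncomputable def DiffOpRing.ord {K : Type} [Field K] {d : K → K} {R : Type} [Ring R]
    (S : DiffOpRing K d R) (r : R) : ℕ := (S.coeff r).support.sup id

/-- A matrix differential operator is non-degenerate (non-zero Dieudonné determinant)
iff it has trivial right kernel over K[∂]. -/
def Nondeg {n : ℕ} {R : Type} [Ring R] (A : Matrix (Fin n) (Fin n) R) : Prop :=
  ∀ X : Fin n → R, A.mulVec X = 0 → X = 0

namespace DiffOpRing

variable {K : Type} [Field K] {d : K → K} {R : Type} [Ring R] (S : DiffOpRing K d R)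

theorem eq_sum_coeff (r : R) : r = (S.coeff r).sum fun i a => S.ι a * S.dop ^ i :=
  (S.repr r).choose_spec.1

theorem coeff_eq_of_eq_sum {r : R} {c : ℕ →₀ K}
    (h : r = c.sum fun i a => S.ι a * S.dop ^ i) : S.coeff r = c :=
  ((S.repr r).choose_spec.2 c h).symm

theorem coeff_add (r s : R) : S.coeff (r + s) = S.coeff r + S.coeff s := by
  refine S.coeff_eq_of_eq_sum ?_
  rw [Finsupp.sum_add_index' (by simp) (by simp [add_mul]), ← S.eq_sum_coeff, ← S.eq_sum_coeff]

noncomputable def coeffHom : R →+ ℕ →₀ K := AddMonoidHom.mk' S.coeff S.coeff_add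

theorem coeff_zero : S.coeff (0 : R) = 0 := map_zero S.coeffHom

theorem coeff_sub (r s : R) : S.coeff (r - s) = S.coeff r - S.coeff s := map_sub S.coeffHom r s

theorem coeff_sum {ι : Type*} (s : Finset ι) (f : ι → R) :
    S.coeff (∑ i ∈ s, f i) = ∑ i ∈ s, S.coeff (f i) :=
  map_sum S.coeffHom f s

theorem coeff_eq_zero_iff {r : R} : S.coeff r = 0 ↔ r = 0 := by
  refine ⟨fun h => ?_, fun h => h ▸ S.coeff_zero⟩
  rw [S.eq_sum_coeff r, h, Finsupp.sum_zero_index]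

theorem coeff_monomial (i : ℕ) (a : K) : S.coeff (S.ι a * S.dop ^ i) = Finsupp.single i a :=
  S.coeff_eq_of_eq_sum (by simp [Finsupp.sum_single_index])

theorem coeff_one : S.coeff (1 : R) = Finsupp.single 0 1 := by
  simpa using S.coeff_monomial 0 1

include S in
theorem nontrivial : Nontrivial R := by
  by_contra h
  rw [not_nontrivial_iff_subsingleton] at h
  have h₁ := S.coeff_eq_of_eq_sum (r := 0) (c := Finsupp.single 0 1) (Subsingleton.elim _ _)
  have h₀ := S.coeff_eq_of_eq_sum (r := 0) (c := 0) (Subsingleton.elim _ _)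
  exact Finsupp.single_ne_zero.mpr one_ne_zero (h₁.symm.trans h₀)

include S in
theorem d_zero : d 0 = 0 := by
  have := S.nontrivial
  have h := S.comm 0
  simp only [map_zero, mul_zero, zero_mul, zero_add] at h
  exact S.ι.injective (by rw [← h, map_zero])

theorem ord_le_iff {r : R} {m : ℕ} : S.ord r ≤ m ↔ ∀ j, m < j → S.coeff r j = 0 := by
  simp only [DiffOpRing.ord, Finset.sup_le_iff, id, Finsupp.mem_support_iff]
  exact forall_congr' fun j => by rw [not_imp_comm, not_le]

theorem coeff_eq_zero_of_ord_lt {r : R} {j : ℕ} (h : S.ord r < j) : S.coeff r j = 0 :=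
  S.ord_le_iff.mp le_rfl j h

theorem coeff_ord_ne_zero {r : R} (h : r ≠ 0) : S.coeff r (S.ord r) ≠ 0 := by
  obtain ⟨i, hi, hsup⟩ := Finset.exists_mem_eq_sup _
    (Finsupp.support_nonempty_iff.mpr ((S.coeff_eq_zero_iff).not.mpr h)) id
  rw [DiffOpRing.ord, hsup]
  exact Finsupp.mem_support_iff.mp hi

theorem ord_one : S.ord (1 : R) = 0 :=
  Nat.le_zero.mp <| S.ord_le_iff.mpr fun j hj => by
    rw [S.coeff_one, Finsupp.single_eq_of_ne (by omega)]

theorem ord_monomial_le (k : ℕ) (c : K) : S.ord (S.ι c * S.dop ^ k) ≤ k :=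
  S.ord_le_iff.mpr fun j hj => by rw [S.coeff_monomial, Finsupp.single_eq_of_ne (by omega)]

theorem eq_ι_of_ord_eq_zero {r : R} (h : S.ord r = 0) : r = S.ι (S.coeff r 0) := by
  have hc : S.coeff r = Finsupp.single 0 (S.coeff r 0) := by
    ext (_ | j)
    · simp
    · rw [S.coeff_eq_zero_of_ord_lt (by omega), Finsupp.single_eq_of_ne (by omega)]
  conv_lhs => rw [S.eq_sum_coeff r, hc]
  simp [Finsupp.sum_single_index]

theorem isUnit_of_ord_eq_zero {r : R} (hr : r ≠ 0) (h : S.ord r = 0) : IsUnit r := by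
  have hc := S.coeff_ord_ne_zero hr
  rw [h] at hc
  rw [S.eq_ι_of_ord_eq_zero h]
  exact (isUnit_iff_ne_zero.mpr hc).map S.ι

theorem coeff_dop_mul (r : R) :
    S.coeff (S.dop * r) = (S.coeff r).mapDomain Nat.succ + (S.coeff r).mapRange d S.d_zero := by
  refine S.coeff_eq_of_eq_sum ?_
  rw [Finsupp.sum_add_index' (by simp) (by simp [add_mul]),
    Finsupp.sum_mapDomain_index (by simp) (by simp [add_mul]),
    Finsupp.sum_mapRange_index (by simp)]
  conv_lhs => rw [S.eq_sum_coeff r]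
  rw [Finsupp.mul_sum, ← Finsupp.sum_add]
  refine Finsupp.sum_congr fun i _ => ?_
  rw [← mul_assoc, S.comm, add_mul, mul_assoc, ← pow_succ']

theorem coeff_dop_mul_succ (r : R) (j : ℕ) :
    S.coeff (S.dop * r) (j + 1) = S.coeff r j + d (S.coeff r (j + 1)) := by
  rw [coeff_dop_mul, Finsupp.add_apply, Finsupp.mapRange_apply,
    Finsupp.mapDomain_apply Nat.succ_injective]

theorem ord_dop_mul_le_and_coeff_succ {r : R} {m : ℕ} (h : S.ord r ≤ m) :
    S.ord (S.dop * r) ≤ m + 1 ∧ S.coeff (S.dop * r) (m + 1) = S.coeff r m := by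
  have hr := S.ord_le_iff.mp h
  refine ⟨S.ord_le_iff.mpr fun j hj => ?_, ?_⟩
  · obtain ⟨j, rfl⟩ : ∃ i, j = i + 1 := ⟨j - 1, by omega⟩
    rw [coeff_dop_mul_succ, hr j (by omega), hr (j + 1) (by omega), S.d_zero, add_zero]
  · rw [coeff_dop_mul_succ, hr (m + 1) (by omega), S.d_zero, add_zero]

theorem ord_dop_pow_mul_le_and_coeff_add {r : R} {m : ℕ} (h : S.ord r ≤ m) (k : ℕ) :
    S.ord (S.dop ^ k * r) ≤ m + k ∧ S.coeff (S.dop ^ k * r) (m + k) = S.coeff r m := by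
  induction k with
  | zero => simpa using h
  | succ k ih =>
    rw [pow_succ', mul_assoc, ← add_assoc, ← ih.2]
    exact S.ord_dop_mul_le_and_coeff_succ ih.1

theorem coeff_ι_mul (c : K) (r : R) (j : ℕ) : S.coeff (S.ι c * r) j = c * S.coeff r j := by
  have : S.coeff (S.ι c * r) = (S.coeff r).mapRange (c * ·) (mul_zero c) := by
    refine S.coeff_eq_of_eq_sum ?_
    rw [Finsupp.sum_mapRange_index (by simp)]
    conv_lhs => rw [S.eq_sum_coeff r]
    simp only [Finsupp.mul_sum, map_mul, mul_assoc]
  rw [this, Finsupp.mapRange_apply]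

theorem ord_mul_le_and_coeff_add {x y : R} {m l : ℕ} (hx : S.ord x ≤ m) (hy : S.ord y ≤ l) :
    S.ord (x * y) ≤ m + l ∧ S.coeff (x * y) (m + l) = S.coeff x m * S.coeff y l := by
  have hcoeff : ∀ j, S.coeff (x * y) j =
      ∑ i ∈ (S.coeff x).support, S.coeff x i * S.coeff (S.dop ^ i * y) j := fun j => by
    conv_lhs => rw [S.eq_sum_coeff x]
    rw [Finsupp.sum, Finset.sum_mul, coeff_sum, Finset.sum_apply']
    simp only [mul_assoc, coeff_ι_mul]
  have hsupp : ∀ i ∈ (S.coeff x).support, i ≤ m := fun i hi => by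
    by_contra h
    exact Finsupp.mem_support_iff.mp hi (S.ord_le_iff.mp hx i (by omega))
  have hlow : ∀ i ∈ (S.coeff x).support, ∀ j, l + i < j → S.coeff (S.dop ^ i * y) j = 0 :=
    fun i _ => S.ord_le_iff.mp (S.ord_dop_pow_mul_le_and_coeff_add hy i).1
  refine ⟨S.ord_le_iff.mpr fun j hj => ?_, ?_⟩
  · rw [hcoeff]
    exact Finset.sum_eq_zero fun i hi => by
      rw [hlow i hi j (by have := hsupp i hi; omega), mul_zero]
  · rw [hcoeff, Finset.sum_eq_single m]
    · rw [add_comm, (S.ord_dop_pow_mul_le_and_coeff_add hy m).2]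
    · intro i hi him
      rw [hlow i hi (m + l) (by have := hsupp i hi; omega), mul_zero]
    · intro hm
      simp [Finsupp.notMem_support_iff.mp hm]

theorem sub_eq_zero_or_ord_sub_lt {x y : R} {m : ℕ} (hx : S.ord x ≤ m) (hy : S.ord y ≤ m)
    (h : S.coeff x m = S.coeff y m) : x - y = 0 ∨ S.ord (x - y) < m := by
  refine or_iff_not_imp_left.mpr fun hne => lt_of_le_of_ne ?_ fun heq => ?_
  · exact S.ord_le_iff.mpr fun j hj => by
      rw [coeff_sub, Finsupp.sub_apply, S.ord_le_iff.mp hx j hj, S.ord_le_iff.mp hy j hj, sub_zero]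
  · apply S.coeff_ord_ne_zero hne
    rw [heq, coeff_sub, Finsupp.sub_apply, h, sub_self]

theorem exists_sub_eq_zero_or_ord_lt_of_step (f : R →+ R) {b : R}
    (step : ∀ a, a ≠ 0 → S.ord b ≤ S.ord a →
      ∃ q, a - f q = 0 ∨ S.ord (a - f q) < S.ord a)
    (a : R) : ∃ q, a - f q = 0 ∨ S.ord (a - f q) < S.ord b := by
  induction h : S.ord a using Nat.strong_induction_on generalizing a with
  | _ N ih =>
  by_cases ha : a = 0 ∨ S.ord a < S.ord b
  · exact ⟨0, by simpa using ha⟩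
  push Not at ha
  obtain ⟨q₀, hq₀ | hq₀⟩ := step a ha.1 ha.2
  · exact ⟨q₀, Or.inl hq₀⟩
  obtain ⟨q, hq⟩ := ih _ (h ▸ hq₀) (a - f q₀) rfl
  exact ⟨q₀ + q, by rwa [map_add, ← sub_sub]⟩

theorem exists_left_division {b : R} (hb : b ≠ 0) (a : R) :
    ∃ q, a - q * b = 0 ∨ S.ord (a - q * b) < S.ord b := by
  refine S.exists_sub_eq_zero_or_ord_lt_of_step (AddMonoidHom.mulRight b) (fun a ha hab => ?_) a
  set c := S.coeff a (S.ord a) * (S.coeff b (S.ord b))⁻¹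
  obtain ⟨hle, hlead⟩ :=
    S.ord_mul_le_and_coeff_add (S.ord_monomial_le (S.ord a - S.ord b) c) le_rfl
  rw [Nat.sub_add_cancel hab] at hle hlead
  refine ⟨S.ι c * S.dop ^ (S.ord a - S.ord b),
    S.sub_eq_zero_or_ord_sub_lt (y := S.ι c * S.dop ^ (S.ord a - S.ord b) * b) le_rfl hle ?_⟩
  rw [hlead, S.coeff_monomial, Finsupp.single_eq_same,
    inv_mul_cancel_right₀ (S.coeff_ord_ne_zero hb)]

theorem exists_right_division {b : R} (hb : b ≠ 0) (a : R) :
    ∃ q, a - b * q = 0 ∨ S.ord (a - b * q) < S.ord b := by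
  refine S.exists_sub_eq_zero_or_ord_lt_of_step (AddMonoidHom.mulLeft b) (fun a ha hab => ?_) a
  set c := (S.coeff b (S.ord b))⁻¹ * S.coeff a (S.ord a)
  obtain ⟨hle, hlead⟩ :=
    S.ord_mul_le_and_coeff_add le_rfl (S.ord_monomial_le (S.ord a - S.ord b) c)
  rw [Nat.add_sub_cancel' hab] at hle hlead
  refine ⟨S.ι c * S.dop ^ (S.ord a - S.ord b),
    S.sub_eq_zero_or_ord_sub_lt (y := b * (S.ι c * S.dop ^ (S.ord a - S.ord b))) le_rfl hle ?_⟩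
  rw [hlead, S.coeff_monomial, Finsupp.single_eq_same,
    mul_inv_cancel_left₀ (S.coeff_ord_ne_zero hb)]

end DiffOpRing

open Matrix

section Nondeg

variable {n : ℕ} {R : Type} [Ring R]

theorem Nondeg.mul {A B : Matrix (Fin n) (Fin n) R} (hA : Nondeg A) (hB : Nondeg B) :
    Nondeg (A * B) := fun X hX => hB X (hA _ (by rwa [mulVec_mulVec]))

theorem IsUnit.nondeg {A : Matrix (Fin n) (Fin n) R} (hA : IsUnit A) : Nondeg A := by
  obtain ⟨u, rfl⟩ := hA
  intro X hX
  simpa [mulVec_mulVec] using congrArg (u⁻¹.val *ᵥ ·) hX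

end Nondeg

namespace Matrix

variable {ι R : Type*} [LinearOrder ι] [Ring R]

def rowAdd (k : ι) (v : ι → R) : Matrix ι ι R :=
  1 + of fun i j => if j = k ∧ k < i then v i else 0

def colAdd (k : ι) (w : ι → R) : Matrix ι ι R :=
  1 + of fun i j => if i = k ∧ k < j then w j else 0

theorem rowAdd_apply_of_lt (k : ι) (v : ι → R) {i j : ι} (h : i < j) : rowAdd k v i j = 0 := by
  rw [rowAdd, add_apply, one_apply_ne h.ne, of_apply, if_neg (by grind), add_zero]

theorem rowAdd_apply_self (k : ι) (v : ι → R) (i : ι) : rowAdd k v i i = 1 := by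
  rw [rowAdd, add_apply, one_apply_eq, of_apply, if_neg (by grind), add_zero]

theorem colAdd_apply_of_lt (k : ι) (w : ι → R) {i j : ι} (h : j < i) : colAdd k w i j = 0 := by
  rw [colAdd, add_apply, one_apply_ne h.ne', of_apply, if_neg (by grind), add_zero]

theorem colAdd_apply_self (k : ι) (w : ι → R) (i : ι) : colAdd k w i i = 1 := by
  rw [colAdd, add_apply, one_apply_eq, of_apply, if_neg (by grind), add_zero]

variable [Fintype ι]

theorem rowAdd_mul_apply (k : ι) (v : ι → R) (B : Matrix ι ι R) (i j : ι) :
    (rowAdd k v * B) i j = B i j + if k < i then v i * B k j else 0 := by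
  rw [rowAdd, add_mul, one_mul, add_apply, mul_apply]
  simp [ite_and]

theorem mul_colAdd_apply (k : ι) (w : ι → R) (B : Matrix ι ι R) (i j : ι) :
    (B * colAdd k w) i j = B i j + if k < j then B i k * w j else 0 := by
  rw [colAdd, mul_add, mul_one, add_apply, mul_apply]
  simp [ite_and]

theorem isUnit_rowAdd (k : ι) (v : ι → R) : IsUnit (rowAdd k v) := by
  refine IsNilpotent.isUnit_one_add ⟨2, ?_⟩
  ext i j
  simp only [pow_two, mul_apply, of_apply, zero_apply]
  exact Finset.sum_eq_zero fun l _ => by grind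

theorem isUnit_colAdd (k : ι) (w : ι → R) : IsUnit (colAdd k w) := by
  refine IsNilpotent.isUnit_one_add ⟨2, ?_⟩
  ext i j
  simp only [pow_two, mul_apply, of_apply, zero_apply]
  exact Finset.sum_eq_zero fun l _ => by grind

end Matrix

variable {K : Type} [Field K] {d : K → K} {R : Type} [Ring R] {n : ℕ}

theorem DiffOpRing.exists_rowAdd_colAdd_reducing_pivot (S : DiffOpRing K d R)
    (B : Matrix (Fin n) (Fin n) R) {p : Fin n} (hp : B p p ≠ 0) :
    ∃ v w : Fin n → R, (rowAdd p v * B * colAdd p w) p p = B p p ∧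
      ∀ i j, (p < i ∧ j = p ∨ i = p ∧ p < j) →
        (rowAdd p v * B * colAdd p w) i j = 0 ∨
          S.ord ((rowAdd p v * B * colAdd p w) i j) < S.ord (B p p) := by
  choose v hv using fun i => S.exists_left_division hp (B i p)
  choose w hw using fun j => S.exists_right_division hp (B p j)
  refine ⟨fun i => -v i, fun j => -w j, by simp [rowAdd_mul_apply, mul_colAdd_apply], ?_⟩
  rintro i j (⟨hi, rfl⟩ | ⟨rfl, hj⟩)
  · simpa [rowAdd_mul_apply, mul_colAdd_apply, hi, ← sub_eq_add_neg] using hv i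
  · simpa [rowAdd_mul_apply, mul_colAdd_apply, hj, ← sub_eq_add_neg] using hw j

structure Diagonalized (k : ℕ) (B : Matrix (Fin n) (Fin n) R) : Prop where
  apply_eq_zero : ∀ i j : Fin n, i ≠ j → ((i : ℕ) < k ∨ (j : ℕ) < k) → B i j = 0
  apply_self_ne_zero : ∀ i : Fin n, (i : ℕ) < k → B i i ≠ 0

namespace Diagonalized

variable {k : ℕ} {B : Matrix (Fin n) (Fin n) R}

theorem zero (B : Matrix (Fin n) (Fin n) R) : Diagonalized 0 B :=
  ⟨fun _ _ _ h => by omega, fun _ h => by omega⟩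

theorem submatrix (hB : Diagonalized k B) {σ τ : Equiv.Perm (Fin n)}
    (hσ : ∀ i : Fin n, (i : ℕ) < k → σ i = i)
    (hτ : ∀ i : Fin n, (i : ℕ) < k → τ i = i) :
    Diagonalized k (B.submatrix σ τ) := by
  have lt_iff {π : Equiv.Perm (Fin n)} (hπ : ∀ i : Fin n, (i : ℕ) < k → π i = i)
      (i : Fin n) : (π i : ℕ) < k ↔ (i : ℕ) < k :=
    ⟨fun h => by rwa [← π.injective (hπ _ h)], fun h => by rwa [hπ i h]⟩
  refine ⟨fun i j hij hk =>
      hB.apply_eq_zero _ _ (fun h => hij ?_) (by rwa [lt_iff hσ, lt_iff hτ]),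
    fun i hi => by simpa [hσ i hi, hτ i hi] using hB.apply_self_ne_zero i hi⟩
  rcases hk with hi | hj
  · have hj : (τ j : ℕ) < k := h ▸ (lt_iff hσ i).mpr hi
    rwa [hσ i hi, hτ j ((lt_iff hτ j).mp hj)] at h
  · have hi : (σ i : ℕ) < k := h ▸ (lt_iff hτ j).mpr hj
    rwa [hτ j hj, hσ i ((lt_iff hσ i).mp hi)] at h

theorem succ {p : Fin n} (hB : Diagonalized p B) (hp : B p p ≠ 0)
    (hcol : ∀ i, p < i → B i p = 0) (hrow : ∀ j, p < j → B p j = 0) :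
    Diagonalized (p + 1) B := by
  refine ⟨fun i j hij hk => ?_, fun i hi => ?_⟩
  · by_cases hlt : (i : ℕ) < p ∨ (j : ℕ) < p
    · exact hB.apply_eq_zero i j hij hlt
    rcases hk with hi | hj
    · obtain rfl : i = p := Fin.ext (by omega)
      exact hrow j (lt_of_le_of_ne (Fin.le_def.mpr (by omega)) hij)
    · obtain rfl : j = p := Fin.ext (by omega)
      exact hcol i (lt_of_le_of_ne (Fin.le_def.mpr (by omega)) hij.symm)
  · rcases Nat.lt_succ_iff_lt_or_eq.mp hi with hi | hi
    · exact hB.apply_self_ne_zero i hi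
    · rwa [Fin.ext hi]

theorem rowAdd_mul_mul_colAdd {p : Fin n} (hB : Diagonalized p B) (v w : Fin n → R) :
    Diagonalized p (rowAdd p v * B * colAdd p w) := by
  have entry (i j : Fin n) (h : (i : ℕ) < p ∨ (j : ℕ) < p) :
      (rowAdd p v * B * colAdd p w) i j = B i j := by
    rw [mul_colAdd_apply, rowAdd_mul_apply, rowAdd_mul_apply]
    rcases h with h | h
    · have hpi : ¬ p < i := by rw [Fin.lt_def]; omega
      simp [hpi, hB.apply_eq_zero i p (Fin.ne_of_lt (Fin.lt_def.mpr h)) (Or.inl h)]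
    · have hpj : ¬ p < j := by rw [Fin.lt_def]; omega
      simp [hpj, hB.apply_eq_zero p j (Fin.ne_of_gt (Fin.lt_def.mpr h)) (Or.inr h)]
  exact ⟨fun i j hij h => (entry i j h).trans (hB.apply_eq_zero i j hij h),
    fun i hi => (entry i i (Or.inl hi)).trans_ne (hB.apply_self_ne_zero i hi)⟩

theorem exists_apply_ne_zero [Nontrivial R] (hB : Diagonalized k B) (hnd : Nondeg B)
    (hk : k < n) : ∃ i j : Fin n, k ≤ i ∧ k ≤ j ∧ B i j ≠ 0 := by
  by_contra! h
  have hcol : B *ᵥ Pi.single ⟨k, hk⟩ 1 = 0 := by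
    ext i
    rw [mulVec_single_one, col_apply, Pi.zero_apply]
    by_cases hi : (i : ℕ) < k
    · exact hB.apply_eq_zero i _ (Fin.ne_of_lt (Fin.lt_def.mpr hi)) (Or.inl hi)
    · exact h i _ (by omega) le_rfl
  simpa using congrFun (hnd _ hcol) ⟨k, hk⟩

theorem isUnit (hB : Diagonalized n B) (h : ∀ i, IsUnit (B i i)) : IsUnit B := by
  have hdiag : B = diagonal fun i => B i i := by
    ext i j
    by_cases hij : i = j
    · simp [hij]
    · rw [diagonal_apply_ne _ hij, hB.apply_eq_zero i j hij (Or.inl i.isLt)]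
  rw [hdiag]
  exact (Pi.isUnit_iff.mpr h).map (diagonalRingHom (Fin n) R)

end Diagonalized

structure IsDieudonneDegree (S : DiffOpRing K d R) (deg : Matrix (Fin n) (Fin n) R → ℤ) :
    Prop where
  map_mul : ∀ A B : Matrix (Fin n) (Fin n) R, Nondeg A → Nondeg B →
    deg (A * B) = deg A + deg B
  eq_sum_ord : ∀ T : Matrix (Fin n) (Fin n) R, (∀ i j : Fin n, j < i → T i j = 0) →
    (∀ i, T i i ≠ 0) → deg T = ∑ i, (S.ord (T i i) : ℤ)

def DegEquiv (deg : Matrix (Fin n) (Fin n) R → ℤ) (B B' : Matrix (Fin n) (Fin n) R) : Prop :=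
  ∃ P Q, IsUnit P ∧ deg P = 0 ∧ IsUnit Q ∧ deg Q = 0 ∧ B' = P * B * Q

namespace DegEquiv

variable {deg : Matrix (Fin n) (Fin n) R → ℤ} {B B' : Matrix (Fin n) (Fin n) R}

theorem nondeg (h : DegEquiv deg B B') (hB : Nondeg B) : Nondeg B' := by
  obtain ⟨P, Q, hP, -, hQ, -, rfl⟩ := h
  exact (hP.nondeg.mul hB).mul hQ.nondeg

theorem isUnit_iff (h : DegEquiv deg B B') : IsUnit B' ↔ IsUnit B := by
  obtain ⟨P, Q, ⟨P, rfl⟩, -, ⟨Q, rfl⟩, -, rfl⟩ := h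
  rw [Units.isUnit_mul_units, Units.isUnit_units_mul]

end DegEquiv

namespace IsDieudonneDegree

variable {S : DiffOpRing K d R} {deg : Matrix (Fin n) (Fin n) R → ℤ}
  (hdeg : IsDieudonneDegree S deg)
include hdeg

theorem deg_eq_zero_of_unitriangular {T : Matrix (Fin n) (Fin n) R}
    (hT : ∀ i j : Fin n, j < i → T i j = 0) (h1 : ∀ i, T i i = 1) : deg T = 0 := by
  have := S.nontrivial
  rw [hdeg.eq_sum_ord T hT fun i => by simp [h1]]
  simp [h1, S.ord_one]

theorem deg_one : deg 1 = 0 :=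
  hdeg.deg_eq_zero_of_unitriangular (fun _ _ h => one_apply_ne h.ne') fun _ => one_apply_eq _

theorem deg_eq_zero_of_mul_self_eq_one {P : Matrix (Fin n) (Fin n) R} (h : P * P = 1) :
    deg P = 0 := by
  have hP : IsUnit P := ⟨⟨P, P, h, h⟩, rfl⟩
  have := hdeg.map_mul P P hP.nondeg hP.nondeg
  rw [h, hdeg.deg_one] at this
  omega

theorem deg_eq_zero_of_lower_unitriangular {L : Matrix (Fin n) (Fin n) R} (hL : IsUnit L)
    (hT : ∀ i j : Fin n, i < j → L i j = 0) (h1 : ∀ i, L i i = 1) : deg L = 0 := by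
  set W := (Fin.revPerm : Equiv.Perm (Fin n)).permMatrix R
  have hW : W * W = 1 := by
    have : Fin.revPerm.trans Fin.revPerm = Equiv.refl (Fin n) := Equiv.ext Fin.rev_rev
    simp [W, ← PEquiv.toMatrix_trans, ← Equiv.toPEquiv_trans, this]
  have hWu : IsUnit W := ⟨⟨W, W, hW, hW⟩, rfl⟩
  have hconj : W * L * W = L.submatrix Fin.rev Fin.rev := by
    rw [PEquiv.toMatrix_toPEquiv_mul, PEquiv.mul_toMatrix_toPEquiv]
    rfl
  have hdeg_conj : deg (W * L * W) = deg L := by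
    rw [hdeg.map_mul _ _ (hWu.nondeg.mul hL.nondeg) hWu.nondeg,
      hdeg.map_mul _ _ hWu.nondeg hL.nondeg, hdeg.deg_eq_zero_of_mul_self_eq_one hW]
    ring
  rw [← hdeg_conj, hconj]
  exact hdeg.deg_eq_zero_of_unitriangular (fun i j h => hT _ _ (Fin.rev_lt_rev.mpr h))
    fun i => h1 _

theorem degEquiv_refl (B : Matrix (Fin n) (Fin n) R) : DegEquiv deg B B :=
  ⟨1, 1, isUnit_one, hdeg.deg_one, isUnit_one, hdeg.deg_one, by simp⟩

theorem degEquiv_trans {B B' B'' : Matrix (Fin n) (Fin n) R} (h : DegEquiv deg B B')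
    (h' : DegEquiv deg B' B'') : DegEquiv deg B B'' := by
  obtain ⟨P, Q, hP, hP0, hQ, hQ0, rfl⟩ := h
  obtain ⟨P', Q', hP', hP'0, hQ', hQ'0, rfl⟩ := h'
  refine ⟨P' * P, Q * Q', hP'.mul hP, ?_, hQ.mul hQ', ?_, by simp only [mul_assoc]⟩
  · rw [hdeg.map_mul _ _ hP'.nondeg hP.nondeg, hP0, hP'0, add_zero]
  · rw [hdeg.map_mul _ _ hQ.nondeg hQ'.nondeg, hQ0, hQ'0, add_zero]

theorem deg_eq_of_degEquiv {B B' : Matrix (Fin n) (Fin n) R} (h : DegEquiv deg B B')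
    (hB : Nondeg B) : deg B' = deg B := by
  obtain ⟨P, Q, hP, hP0, hQ, hQ0, rfl⟩ := h
  rw [hdeg.map_mul _ _ (hP.nondeg.mul hB) hQ.nondeg, hdeg.map_mul _ _ hP.nondeg hB, hP0, hQ0]
  ring

theorem degEquiv_submatrix_swap (B : Matrix (Fin n) (Fin n) R) (a b c e : Fin n) :
    DegEquiv deg B (B.submatrix (Equiv.swap a b) (Equiv.swap c e)) :=
  ⟨swap R a b, swap R c e, ⟨⟨_, _, swap_mul_self a b, swap_mul_self a b⟩, rfl⟩,
    hdeg.deg_eq_zero_of_mul_self_eq_one (swap_mul_self a b),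
    ⟨⟨_, _, swap_mul_self c e, swap_mul_self c e⟩, rfl⟩,
    hdeg.deg_eq_zero_of_mul_self_eq_one (swap_mul_self c e),
    by simp [swap, PEquiv.toMatrix_toPEquiv_mul, PEquiv.mul_toMatrix_toPEquiv]⟩

theorem degEquiv_rowAdd_mul_mul_colAdd (B : Matrix (Fin n) (Fin n) R) (p : Fin n)
    (v w : Fin n → R) : DegEquiv deg B (rowAdd p v * B * colAdd p w) :=
  ⟨_, _, isUnit_rowAdd p v,
    hdeg.deg_eq_zero_of_lower_unitriangular (isUnit_rowAdd p v)
      (fun _ _ => rowAdd_apply_of_lt p v) (rowAdd_apply_self p v),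
    isUnit_colAdd p w,
    hdeg.deg_eq_zero_of_unitriangular (fun _ _ => colAdd_apply_of_lt p w) (colAdd_apply_self p w),
    rfl⟩

theorem exists_degEquiv_diagonalized_succ {p : Fin n} (B : Matrix (Fin n) (Fin n) R)
    (hB : Diagonalized p B) {i j : Fin n} (hi : p ≤ i) (hj : p ≤ j) (hne : B i j ≠ 0) :
    ∃ B', DegEquiv deg B B' ∧ Diagonalized (p + 1) B' := by
  induction h : S.ord (B i j) using Nat.strong_induction_on generalizing B i j with
  | _ N ih =>
  set B₁ := B.submatrix (Equiv.swap p i) (Equiv.swap p j)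
  have hB₁ : Diagonalized p B₁ := hB.submatrix
    (fun x hx => Equiv.swap_apply_of_ne_of_ne (Fin.ne_of_lt hx) (Fin.ne_of_lt (by omega)))
    (fun x hx => Equiv.swap_apply_of_ne_of_ne (Fin.ne_of_lt hx) (Fin.ne_of_lt (by omega)))
  have hpivot : B₁ p p = B i j := by simp [B₁]
  obtain ⟨v, w, hpivot', hsmall⟩ := S.exists_rowAdd_colAdd_reducing_pivot B₁ (hpivot ▸ hne)
  set B₂ := rowAdd p v * B₁ * colAdd p w
  have e₁₂ : DegEquiv deg B B₂ := hdeg.degEquiv_trans (hdeg.degEquiv_submatrix_swap B p i p j)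
    (hdeg.degEquiv_rowAdd_mul_mul_colAdd B₁ p v w)
  have hB₂ : Diagonalized p B₂ := hB₁.rowAdd_mul_mul_colAdd v w
  by_cases hdone : ∃ i' j', (p < i' ∧ j' = p ∨ i' = p ∧ p < j') ∧ B₂ i' j' ≠ 0
  · obtain ⟨i', j', hpos, hne'⟩ := hdone
    have hlt : S.ord (B₂ i' j') < N := h ▸ hpivot ▸ (hsmall i' j' hpos).resolve_left hne'
    obtain ⟨B', e, hB'⟩ := ih _ hlt B₂ hB₂
      (by rcases hpos with ⟨h, rfl⟩ | ⟨rfl, -⟩ <;> order)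
      (by rcases hpos with ⟨-, rfl⟩ | ⟨rfl, h⟩ <;> order) hne' rfl
    exact ⟨B', hdeg.degEquiv_trans e₁₂ e, hB'⟩
  · push Not at hdone
    exact ⟨B₂, e₁₂, hB₂.succ (hpivot' ▸ hpivot ▸ hne)
      (fun i' hi' => hdone i' p (Or.inl ⟨hi', rfl⟩))
      (fun j' hj' => hdone p j' (Or.inr ⟨rfl, hj'⟩))⟩

theorem exists_degEquiv_diagonalized {A : Matrix (Fin n) (Fin n) R} (hA : Nondeg A) :
    ∃ D, DegEquiv deg A D ∧ Diagonalized n D := by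
  have := S.nontrivial
  suffices ∀ k ≤ n, ∃ D, DegEquiv deg A D ∧ Diagonalized k D from this n le_rfl
  intro k hk
  induction k with
  | zero => exact ⟨A, hdeg.degEquiv_refl A, Diagonalized.zero A⟩
  | succ k ih =>
    obtain ⟨D, e, hD⟩ := ih (by omega)
    obtain ⟨i, j, hi, hj, hne⟩ := hD.exists_apply_ne_zero (e.nondeg hA) (by omega)
    obtain ⟨D', e', hD'⟩ := hdeg.exists_degEquiv_diagonalized_succ (p := ⟨k, by omega⟩) D hD
      (Fin.le_def.mpr hi) (Fin.le_def.mpr hj) hne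
    exact ⟨D', hdeg.degEquiv_trans e e', hD'⟩

theorem exists_diagonalized_deg_eq_sum_ord {A : Matrix (Fin n) (Fin n) R} (hA : Nondeg A) :
    ∃ D, DegEquiv deg A D ∧ Diagonalized n D ∧ deg A = ∑ i, (S.ord (D i i) : ℤ) := by
  obtain ⟨D, e, hD⟩ := hdeg.exists_degEquiv_diagonalized hA
  refine ⟨D, e, hD, ?_⟩
  rw [← hdeg.deg_eq_of_degEquiv e hA]
  exact hdeg.eq_sum_ord D (fun i j hji => hD.apply_eq_zero i j hji.ne' (Or.inl i.isLt))
    fun i => hD.apply_self_ne_zero i i.isLt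

theorem deg_nonneg {A : Matrix (Fin n) (Fin n) R} (hA : Nondeg A) : 0 ≤ deg A := by
  obtain ⟨D, -, -, hsum⟩ := hdeg.exists_diagonalized_deg_eq_sum_ord hA
  rw [hsum]
  positivity

theorem deg_eq_zero_of_isUnit {A : Matrix (Fin n) (Fin n) R} (hA : IsUnit A) : deg A = 0 := by
  obtain ⟨u, rfl⟩ := hA
  have hsum := hdeg.map_mul _ _ u.isUnit.nondeg u⁻¹.isUnit.nondeg
  rw [u.mul_inv, hdeg.deg_one] at hsum
  have := hdeg.deg_nonneg u.isUnit.nondeg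
  have := hdeg.deg_nonneg u⁻¹.isUnit.nondeg
  omega

theorem isUnit_of_deg_eq_zero {A : Matrix (Fin n) (Fin n) R} (hA : Nondeg A) (h : deg A = 0) :
    IsUnit A := by
  obtain ⟨D, e, hD, hsum⟩ := hdeg.exists_diagonalized_deg_eq_sum_ord hA
  have hord : ∀ i, S.ord (D i i) = 0 := fun i => by
    have := (Finset.sum_eq_zero_iff_of_nonneg fun i _ => Int.natCast_nonneg (S.ord (D i i))).mp
      (hsum ▸ h) i (Finset.mem_univ i)
    exact_mod_cast this
  exact e.isUnit_iff.mp <| hD.isUnit fun i =>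
    S.isUnit_of_ord_eq_zero (hD.apply_self_ne_zero i i.isLt) (hord i)

end IsDieudonneDegree

theorem stmt_14_general (K : Type) [Field K] (d : K → K)
    (R : Type) [Ring R] (S : DiffOpRing K d R)
    (n : ℕ) (deg : Matrix (Fin n) (Fin n) R → ℤ)
    (hdeg_mul : ∀ A B : Matrix (Fin n) (Fin n) R, Nondeg A → Nondeg B →
      deg (A * B) = deg A + deg B)
    (hdeg_tri : ∀ T : Matrix (Fin n) (Fin n) R, (∀ i j : Fin n, j < i → T i j = 0) →
      (∀ i, T i i ≠ 0) → deg T = ∑ i, (S.ord (T i i) : ℤ))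
    (A : Matrix (Fin n) (Fin n) R) (hA : Nondeg A) :
    0 ≤ deg A ∧ (IsUnit A ↔ deg A = 0) := by
  have hdeg : IsDieudonneDegree S deg := ⟨hdeg_mul, hdeg_tri⟩
  exact ⟨hdeg.deg_nonneg hA, hdeg.deg_eq_zero_of_isUnit, hdeg.isUnit_of_deg_eq_zero hA⟩

/-- Let K be a differential field of characteristic 0 and A ∈ M_n(K[∂])
non-degenerate. Then A is invertible in M_n(K[∂]) iff the degree d(A) of its Dieudonné
determinant is zero; moreover d(A) ≥ 0 always. Here `deg` is any function satisfying
the characterizing properties of the degree of the Dieudonné determinant: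
multiplicativity on non-degenerate matrices, and on upper triangular matrices with
non-zero diagonal it is the sum of the orders of the diagonal entries. -/
theorem stmt_14 (K : Type) [Field K] [CharZero K] (d : K → K)
    (hd_add : ∀ a b : K, d (a + b) = d a + d b)
    (hd_mul : ∀ a b : K, d (a * b) = a * d b + d a * b)
    (R : Type) [Ring R] (S : DiffOpRing K d R)
    (n : ℕ) (deg : Matrix (Fin n) (Fin n) R → ℤ)
    (hdeg_mul : ∀ A B : Matrix (Fin n) (Fin n) R, Nondeg A → Nondeg B →
      deg (A * B) = deg A + deg B)
    (hdeg_tri : ∀ T : Matrix (Fin n) (Fin n) R, (∀ i j : Fin n, j < i → T i j = 0) →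
      (∀ i, T i i ≠ 0) → deg T = ∑ i, (S.ord (T i i) : ℤ))
    (A : Matrix (Fin n) (Fin n) R) (hA : Nondeg A) :
    0 ≤ deg A ∧ (IsUnit A ↔ deg A = 0) :=
  stmt_14_general K d R S n deg hdeg_mul hdeg_tri A hA
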